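/- arXiv:1205.1289 — 9 statements merged into one kernel-verified Lean document; each statement's English description precedes it below -/
import Mathlib

section
/- Let d ≥ 1 and let E ⊆ ℝ^d satisfy the Birkhoff property. Then there exists p ∈ ℝ^d with |p| = 1 such that for every q ∈ ℤ^d with q·p > 0 one has E + q ⊆ E, and for every q ∈ ℤ^d with q·p < 0 one has E ⊆ E + q. -/
/-!
Let `T` be the set of `q ∈ ℤ^d` with `E + q ⊄ E`; by the Birkhoff property `E ⊆ E + q` for
`q ∈ T`, and the `q` with `E ⊆ E + q` form an additive monoid. If no unit vector `p` had
`q · p ≤ 0` on all of `T`, the open half-spaces `{p | q · p > 0}`, `q ∈ T`, would cover the unit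
sphere, finitely many of them by compactness, and separation would put `0` in the convex hull of
`T`. Since `T` consists of integer vectors, approximating `K w` by `⌊K w⌋` for the convex weights
`w` and pigeonholing over `K` turns this into a relation `∑ bᵢ qᵢ = 0` with `bᵢ ∈ ℕ`, `b₀ > 0`.
Then `-q₀` lies in the monoid, i.e. `E - q₀ ⊇ E`, so `E + q₀ ⊆ E`, contradicting `q₀ ∈ T`.
-/

open scoped RealInnerProductSpace

noncomputable def vec {d : ℕ} (q : Fin d → ℤ) : EuclideanSpace ℝ (Fin d) :=
  WithLp.toLp 2 (fun i => (q i : ℝ))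

/-- The translate `E + q` of a set `E ⊆ ℝ^d` by an integer vector `q ∈ ℤ^d`. -/
def transl {d : ℕ} (E : Set (EuclideanSpace ℝ (Fin d))) (q : Fin d → ℤ) :
    Set (EuclideanSpace ℝ (Fin d)) :=
  (fun x => x + vec q) '' E

section Lattice

variable {ι κ : Type*} [Fintype ι] {w : ι → ℝ}

theorem exists_floor_lt_floor (hw₀ : ∀ i, 0 ≤ w i) (hw₁ : ∑ i, w i = 1) {K K' : ℕ}
    (hKK' : K + Fintype.card ι < K') : ∃ i, ⌊K * w i⌋₊ < ⌊K' * w i⌋₊ := by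
  by_contra! h
  have hK' : (K' : ℝ) ≤ K + Fintype.card ι :=
    calc (K' : ℝ) = ∑ i, K' * w i := by rw [← Finset.mul_sum, hw₁, mul_one]
      _ ≤ ∑ i, (K * w i + 1) := Finset.sum_le_sum fun i _ =>
        calc (K' : ℝ) * w i ≤ ⌊K' * w i⌋₊ + 1 := (Nat.lt_floor_add_one _).le
          _ ≤ ⌊K * w i⌋₊ + 1 := by exact_mod_cast Nat.add_le_add_right (h i) 1
          _ ≤ K * w i + 1 := by gcongr; exact Nat.floor_le (by have := hw₀ i; positivity)
      _ = K + Fintype.card ι := by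
        rw [Finset.sum_add_distrib, ← Finset.mul_sum, hw₁]; simp
  exact_mod_cast hKK'.not_ge (by exact_mod_cast hK')

theorem abs_sum_floor_mul_le (z : ι → κ → ℤ) (hw₀ : ∀ i, 0 ≤ w i)
    (hz : ∀ j, ∑ i, w i * z i j = 0) (K : ℕ) (j : κ) :
    |∑ i, (⌊K * w i⌋₊ : ℤ) * z i j| ≤ ∑ i, |z i j| := by
  have hsum : ((∑ i, (⌊K * w i⌋₊ : ℤ) * z i j : ℤ) : ℝ) =
      ∑ i, ((⌊K * w i⌋₊ : ℝ) - K * w i) * z i j := by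
    simp only [sub_mul, Finset.sum_sub_distrib, mul_assoc, ← Finset.mul_sum, hz, mul_zero,
      sub_zero]
    push_cast
    rfl
  have hfloor : ∀ i, |(⌊K * w i⌋₊ : ℝ) - K * w i| ≤ 1 := fun i => by
    have := Nat.floor_le (show 0 ≤ (K : ℝ) * w i by have := hw₀ i; positivity)
    have := Nat.lt_floor_add_one ((K : ℝ) * w i)
    rw [abs_le]; constructor <;> linarith
  suffices h : |((∑ i, (⌊K * w i⌋₊ : ℤ) * z i j : ℤ) : ℝ)| ≤ ∑ i, |(z i j : ℝ)| by
    exact_mod_cast h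
  rw [hsum]
  refine (Finset.abs_sum_le_sum_abs _ _).trans (Finset.sum_le_sum fun i _ => ?_)
  rw [abs_mul]
  exact mul_le_of_le_one_left (abs_nonneg _) (hfloor i)

theorem exists_sum_nsmul_eq_zero [Fintype κ] (z : ι → κ → ℤ) (hw₀ : ∀ i, 0 ≤ w i)
    (hw₁ : ∑ i, w i = 1) (hz : ∀ j, ∑ i, w i * z i j = 0) :
    ∃ b : ι → ℕ, ∑ i, b i • z i = 0 ∧ ∃ i, 0 < b i := by
  classical
  set u : ℕ → κ → ℤ := fun K => ∑ i, ⌊K * w i⌋₊ • z i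
  set B : κ → ℤ := fun j => ∑ i, |z i j|
  have hu : ∀ K, u K ∈ Set.Icc (-B) B := fun K => by
    refine ⟨fun j => ?_, fun j => ?_⟩ <;>
    · have := abs_le.1 (abs_sum_floor_mul_le z hw₀ hz K j)
      simp only [u, B, Finset.sum_apply, nsmul_eq_mul, Pi.mul_apply, Pi.natCast_apply,
        Pi.neg_apply]
      linarith
  -- spacing the indices by `card ι + 1` makes `exists_floor_lt_floor` applicable
  obtain ⟨m, n, hmn, hu_eq⟩ := (Set.finite_Icc (-B) B).exists_lt_map_eq_of_forall_mem
    (f := fun n => u ((Fintype.card ι + 1) * n)) (fun n => hu _)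
  set K := (Fintype.card ι + 1) * m
  set K' := (Fintype.card ι + 1) * n
  have hKK' : K + Fintype.card ι < K' := by
    simp only [K, K']
    nlinarith
  have hmono : ∀ i, ⌊K * w i⌋₊ ≤ ⌊K' * w i⌋₊ := fun i => by
    gcongr
    · exact hw₀ i
    · omega
  refine ⟨fun i => ⌊K' * w i⌋₊ - ⌊K * w i⌋₊, ?_, ?_⟩
  · simp only [sub_nsmul _ (hmono _), Finset.sum_add_distrib, Finset.sum_neg_distrib]
    exact add_neg_eq_zero.2 hu_eq.symm
  · obtain ⟨i, hi⟩ := exists_floor_lt_floor hw₀ hw₁ hKK'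
    exact ⟨i, Nat.sub_pos_of_lt hi⟩

end Lattice

theorem neg_mem_closure_of_sum_nsmul_eq_zero {G ι : Type*} [AddCommGroup G] [Fintype ι]
    (z : ι → G) (b : ι → ℕ) (hb : ∑ i, b i • z i = 0) {i₀ : ι} (hi₀ : 0 < b i₀) :
    -z i₀ ∈ AddSubmonoid.closure (Set.range z) := by
  classical
  have hmem : ∀ i, z i ∈ AddSubmonoid.closure (Set.range z) :=
    fun i => AddSubmonoid.subset_closure ⟨i, rfl⟩
  have hsplit : (b i₀ - 1) • z i₀ + ∑ i ∈ Finset.univ.erase i₀, b i • z i + z i₀ = 0 := by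
    rw [add_right_comm, ← succ_nsmul, Nat.sub_add_cancel hi₀,
      Finset.add_sum_erase _ (fun i => b i • z i) (Finset.mem_univ _), hb]
  rw [← eq_neg_of_add_eq_zero_left hsplit]
  exact add_mem (nsmul_mem (hmem i₀) _) (sum_mem fun i _ => nsmul_mem (hmem i) _)

section Sphere

variable {V : Type*} [NormedAddCommGroup V] [InnerProductSpace ℝ V]

theorem exists_finite_subset_forall_exists_inner_pos [ProperSpace V] {s : Set V}
    (h : ∀ p : V, ‖p‖ = 1 → ∃ v ∈ s, 0 < ⟪v, p⟫) :
    ∃ t ⊆ s, t.Finite ∧ ∀ p : V, ‖p‖ = 1 → ∃ v ∈ t, 0 < ⟪v, p⟫ := by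
  have hcover : Metric.sphere (0 : V) 1 ⊆ ⋃ v ∈ s, {p | 0 < ⟪v, p⟫} := fun p hp => by
    obtain ⟨v, hv, hvp⟩ := h p (by simpa using hp)
    exact Set.mem_iUnion₂.2 ⟨v, hv, hvp⟩
  obtain ⟨t, hts, htf, ht⟩ := (isCompact_sphere (0 : V) 1).elim_finite_subcover_image
    (fun v _ => isOpen_lt continuous_const (continuous_const.inner continuous_id)) hcover
  refine ⟨t, hts, htf, fun p hp => ?_⟩
  simpa using ht (show p ∈ Metric.sphere (0 : V) 1 by simpa using hp)

theorem zero_mem_convexHull_of_forall_exists_inner_pos [CompleteSpace V] [Nontrivial V]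
    {s : Set V} (hs : s.Finite) (h : ∀ p : V, ‖p‖ = 1 → ∃ v ∈ s, 0 < ⟪v, p⟫) :
    (0 : V) ∈ convexHull ℝ s := by
  by_contra h₀
  obtain ⟨f, u, hf₀, hfu⟩ := geometric_hahn_banach_point_closed (convex_convexHull ℝ s)
    (hs.isCompact_convexHull ℝ).isClosed h₀
  set p₀ := (InnerProductSpace.toDual ℝ V).symm f
  have hpos : ∀ v ∈ s, 0 < ⟪v, p₀⟫ := fun v hv => by
    rw [real_inner_comm, InnerProductSpace.toDual_symm_apply]
    exact (map_zero f ▸ hf₀).trans (hfu v (subset_convexHull ℝ s hv))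
  obtain ⟨e, he⟩ := exists_norm_eq V zero_le_one
  obtain ⟨v, hv, -⟩ := h e he
  have hp₀ : p₀ ≠ 0 := fun h => by simpa [h] using hpos v hv
  obtain ⟨v, hv, hvp⟩ := h (-(‖p₀‖⁻¹ • p₀)) (by rw [norm_neg]; exact norm_smul_inv_norm hp₀)
  rw [inner_neg_right, real_inner_smul_right] at hvp
  have := mul_pos (inv_pos.2 (norm_pos_iff.2 hp₀)) (hpos v hv)
  linarith

end Sphere

section Birkhoff

variable {d : ℕ} {E : Set (EuclideanSpace ℝ (Fin d))}

theorem vec_zero : vec (0 : Fin d → ℤ) = 0 := by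
  ext i
  simp [vec]

theorem vec_add (a b : Fin d → ℤ) : vec (a + b) = vec a + vec b := by
  ext i
  simp [vec]

theorem vec_neg (q : Fin d → ℤ) : vec (-q) = -vec q := by
  ext i
  simp [vec]

theorem exists_neg_mem_closure_of_zero_mem_convexHull {F : Set (Fin d → ℤ)}
    (h : (0 : EuclideanSpace ℝ (Fin d)) ∈ convexHull ℝ (vec '' F)) :
    ∃ q ∈ F, -q ∈ AddSubmonoid.closure F := by
  obtain ⟨ι, _, w, v, hw₀, hw₁, hv, hsum⟩ := mem_convexHull_iff_exists_fintype.1 h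
  choose z hzF hzv using hv
  have hz : ∀ j, ∑ i, w i * z i j = 0 := fun j => by
    simpa [← hzv, vec] using congrArg (fun x : EuclideanSpace ℝ (Fin d) => x j) hsum
  obtain ⟨b, hb, i₀, hi₀⟩ := exists_sum_nsmul_eq_zero z hw₀ hw₁ hz
  have hzF' : Set.range z ⊆ F := Set.range_subset_iff.2 hzF
  exact ⟨z i₀, hzF i₀,
    AddSubmonoid.closure_mono hzF' (neg_mem_closure_of_sum_nsmul_eq_zero z b hb hi₀)⟩

theorem mem_transl {q : Fin d → ℤ} {x : EuclideanSpace ℝ (Fin d)} :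
    x ∈ transl E q ↔ x - vec q ∈ E := by
  simp [transl, sub_eq_add_neg]

theorem transl_subset_iff_subset_transl_neg {q : Fin d → ℤ} :
    transl E q ⊆ E ↔ E ⊆ transl E (-q) := by
  simp only [Set.subset_def, mem_transl, vec_neg, sub_neg_eq_add]
  exact ⟨fun h x hx => h _ (by simpa using hx), fun h x hx => by simpa using h _ hx⟩

def subsetTranslSubmonoid (E : Set (EuclideanSpace ℝ (Fin d))) : AddSubmonoid (Fin d → ℤ) where
  carrier := {q | E ⊆ transl E q}
  zero_mem' := fun x hx => by rwa [mem_transl, vec_zero, sub_zero]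
  add_mem' := fun {a b} ha hb x hx => by
    rw [mem_transl, vec_add, sub_add_eq_sub_sub_swap]
    exact mem_transl.1 (ha (mem_transl.1 (hb hx)))

theorem exists_norm_eq_one_forall_inner_nonpos (hd : 1 ≤ d)
    (hE : ∀ q : Fin d → ℤ, transl E q ⊆ E ∨ E ⊆ transl E q) :
    ∃ p : EuclideanSpace ℝ (Fin d), ‖p‖ = 1 ∧ ∀ q, ¬ transl E q ⊆ E → ⟪vec q, p⟫ ≤ 0 := by
  have : Nonempty (Fin d) := ⟨⟨0, hd⟩⟩
  by_contra! h
  set T := {q : Fin d → ℤ | ¬ transl E q ⊆ E}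
  obtain ⟨t, htT, htf, ht⟩ := exists_finite_subset_forall_exists_inner_pos (s := vec '' T)
    fun p hp => by
      obtain ⟨q, hq, hqp⟩ := h p hp
      exact ⟨vec q, ⟨q, hq, rfl⟩, hqp⟩
  obtain ⟨q, hqT, hq⟩ := exists_neg_mem_closure_of_zero_mem_convexHull
    (convexHull_mono htT (zero_mem_convexHull_of_forall_exists_inner_pos htf ht))
  have hT : T ⊆ subsetTranslSubmonoid E := fun q hq => (hE q).resolve_left hq
  exact hqT (transl_subset_iff_subset_transl_neg.2 (AddSubmonoid.closure_le.2 hT hq))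

end Birkhoff

/-- If `d ≥ 1` and `E ⊆ ℝ^d` satisfies the Birkhoff property, then there is a unit
vector `p` such that `E + q ⊆ E` whenever `q·p > 0` and `E ⊆ E + q` whenever `q·p < 0`. -/
theorem stmt0 (d : ℕ) (hd : 1 ≤ d) (E : Set (EuclideanSpace ℝ (Fin d)))
    (hBirkhoff : ∀ q : Fin d → ℤ, transl E q ⊆ E ∨ E ⊆ transl E q) :
    ∃ p : EuclideanSpace ℝ (Fin d), ‖p‖ = 1 ∧
      (∀ q : Fin d → ℤ, 0 < ⟪vec q, p⟫ → transl E q ⊆ E) ∧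
      (∀ q : Fin d → ℤ, ⟪vec q, p⟫ < 0 → E ⊆ transl E q) := by
  obtain ⟨p, hp₁, hp⟩ := exists_norm_eq_one_forall_inner_nonpos hd hBirkhoff
  refine ⟨p, hp₁, fun q hq => ?_, fun q hq => ?_⟩
  · by_contra h
    exact (hp q h).not_gt hq
  · by_contra h
    have := hp (-q) (by simpa [transl_subset_iff_subset_transl_neg] using h)
    rw [vec_neg, inner_neg_left] at this
    linarith
end

section
/- Let Z ⊆ ℤ^d satisfy: 0 ∈ Z, Z + Z ⊆ Z (Z is closed under addition), and for every z ∈ ℤ^d either z ∈ Z or −z ∈ Z. Then either Z = ℤ^d, or there exists p ∈ ℝ^d with p ≠ 0 such that q·p ≥ 0 for every q ∈ Z. -/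
/-!
If no nonzero `p` satisfies `0 ≤ ⟪vec q, p⟫` on `Z`, Farkas' lemma makes the real conic hull of
`vec '' Z` dense, hence (being convex) all of `ℝ^d`. An integer point `z` in the cone of integer
vectors lies, by conic Carathéodory, in the cone of a linearly independent subfamily, where its
coefficients are forced to be rational; clearing denominators gives `N • z ∈ Z` for some `N ≥ 1`.
Since `z ∈ Z` or `-z ∈ Z`, and `z = N • z + (N - 1) • (-z)`, in either case `z ∈ Z`.
-/

open scoped RealInnerProductSpace

open Finset

theorem Convex.eq_univ_of_dense {E : Type*} [NormedAddCommGroup E] [NormedSpace ℝ E]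
    [FiniteDimensional ℝ E] {s : Set E} (hs : Convex ℝ s) (hd : Dense s) : s = Set.univ := by
  have hspan : affineSpan ℝ s = ⊤ := eq_top_iff.2 fun x _ =>
    closure_minimal (subset_affineSpan ℝ s) (affineSpan ℝ s).closed_of_finiteDimensional (hd x)
  have hint := hs.interior_nonempty_iff_affineSpan_eq_top.2 hspan
  refine Set.eq_univ_of_univ_subset ?_
  calc Set.univ = interior (closure s) := by rw [hd.closure_eq, interior_univ]
    _ = interior s := hs.interior_closure_eq_interior_of_nonempty_interior hint
    _ ⊆ s := interior_subset

theorem PointedCone.hull_eq_top_or_exists_inner_nonneg {E : Type*} [NormedAddCommGroup E]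
    [InnerProductSpace ℝ E] [FiniteDimensional ℝ E] (S : Set E) :
    PointedCone.hull ℝ S = ⊤ ∨ ∃ y ≠ 0, ∀ x ∈ S, 0 ≤ ⟪x, y⟫ := by
  by_cases hd : Dense (PointedCone.hull ℝ S : Set E)
  · exact .inl (SetLike.coe_injective ((PointedCone.hull ℝ S).convex.eq_univ_of_dense hd))
  · obtain ⟨x₀, hx₀⟩ := not_forall.1 hd
    obtain ⟨y, hy, hx₀y⟩ :=
      ProperCone.hyperplane_separation' (Submodule.closure (PointedCone.hull ℝ S)) (x₀ := x₀) hx₀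
    refine .inr ⟨y, ?_, fun x hx => hy x (subset_closure (Submodule.subset_span hx))⟩
    rintro rfl
    simp at hx₀y

theorem exists_sub_mul_nonneg_eq_zero {𝕜 ι : Type*} [Field 𝕜] [LinearOrder 𝕜]
    [IsStrictOrderedRing 𝕜] {s : Finset ι} {l f : ι → 𝕜} (hl : ∀ i ∈ s, 0 ≤ l i)
    (hf : ∃ i ∈ s, f i ≠ 0) :
    ∃ τ : 𝕜, ∃ i₀ ∈ s, (∀ i ∈ s, 0 ≤ l i - τ * f i) ∧ l i₀ - τ * f i₀ = 0 := by
  wlog hpos : ∃ i ∈ s, 0 < f i generalizing f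
  · obtain ⟨i, hi, hfi⟩ := hf
    have hneg : 0 < -f i := neg_pos.2 ((not_lt.1 fun h => hpos ⟨i, hi, h⟩).lt_of_ne hfi)
    obtain ⟨τ, i₀, hi₀, hnonneg, hzero⟩ :=
      this (f := -f) ⟨i, hi, neg_ne_zero.2 hfi⟩ ⟨i, hi, hneg⟩
    exact ⟨-τ, i₀, hi₀, by simpa using hnonneg, by simpa using hzero⟩
  obtain ⟨i, hi, hfi⟩ := hpos
  obtain ⟨i₀, hi₀, hmin⟩ :=
    (s.filter (0 < f ·)).exists_min_image (fun i => l i / f i) ⟨i, mem_filter.2 ⟨hi, hfi⟩⟩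
  rw [mem_filter] at hi₀
  refine ⟨l i₀ / f i₀, i₀, hi₀.1, fun j hj => ?_, by rw [div_mul_cancel₀ _ hi₀.2.ne', sub_self]⟩
  rcases le_or_gt (f j) 0 with hfj | hfj
  · nlinarith [hl j hj, div_nonneg (hl i₀ hi₀.1) hi₀.2.le]
  · have := hmin j (mem_filter.2 ⟨hj, hfj⟩)
    rw [le_div_iff₀ hfj] at this
    linarith

theorem exists_subset_linearIndepOn_sum_eq {𝕜 M ι : Type*} [Field 𝕜] [LinearOrder 𝕜]
    [IsStrictOrderedRing 𝕜] [AddCommGroup M] [Module 𝕜 M] (v : ι → M) (s : Finset ι)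
    (l : ι → 𝕜) (hl : ∀ i ∈ s, 0 ≤ l i) :
    ∃ t ⊆ s, ∃ l' : ι → 𝕜, (∀ i ∈ t, 0 ≤ l' i) ∧ LinearIndepOn 𝕜 v ↑t ∧
      ∑ i ∈ t, l' i • v i = ∑ i ∈ s, l i • v i := by
  classical
  induction s using Finset.strongInduction generalizing l with
  | H s ih =>
  by_cases hind : LinearIndepOn 𝕜 v ↑s
  · exact ⟨s, subset_rfl, l, hl, hind, rfl⟩
  obtain ⟨f, hfv, hf⟩ := not_linearIndepOn_finset_iff.1 hind
  obtain ⟨τ, i₀, hi₀, hnonneg, hzero⟩ := exists_sub_mul_nonneg_eq_zero hl hf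
  obtain ⟨t, hts, l', hl', hindt, hsum⟩ := ih (s.erase i₀) (erase_ssubset hi₀)
    (fun i => l i - τ * f i) fun i hi => hnonneg i (mem_of_mem_erase hi)
  refine ⟨t, hts.trans (erase_subset _ _), l', hl', hindt, ?_⟩
  calc ∑ i ∈ t, l' i • v i = ∑ i ∈ s.erase i₀, (l i - τ * f i) • v i := hsum
    _ = ∑ i ∈ s, (l i - τ * f i) • v i := by
      rw [sum_erase _ (by rw [hzero, zero_smul])]
    _ = ∑ i ∈ s, l i • v i := by
      simp only [sub_smul, mul_smul, sum_sub_distrib, ← smul_sum, hfv, smul_zero, sub_zero]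

theorem LinearIndependent.exists_nsmul_eq_sum_zsmul {ι M : Type*} [Fintype ι] [AddCommGroup M]
    {v : ι → M} {z : M} (hv : LinearIndependent ℤ v)
    (hdep : ¬LinearIndependent ℤ fun o : Option ι => o.elim z v) :
    ∃ N : ℕ, 0 < N ∧ ∃ a : ι → ℤ, N • z = ∑ i, a i • v i := by
  obtain ⟨g, hg, hg0⟩ := Fintype.not_linearIndependent_iff.1 hdep
  simp only [Fintype.sum_option, Option.elim] at hg
  have hb : g none ≠ 0 := by
    intro hb
    rw [hb, zero_smul, zero_add] at hg
    obtain ⟨o, ho⟩ := hg0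
    cases o with
    | none => exact ho hb
    | some i => exact ho (Fintype.linearIndependent_iff.1 hv _ hg i)
  clear hg0
  wlog hbpos : 0 < g none generalizing g
  · refine this (-g) ?_ (neg_ne_zero.2 hb) (neg_pos.2 ((not_lt.1 hbpos).lt_of_ne hb))
    simp only [Pi.neg_apply, neg_smul, sum_neg_distrib, ← neg_add, hg, neg_zero]
  lift g none to ℕ using hbpos.le with N
  refine ⟨N, by omega, fun i => -g (some i), ?_⟩
  rw [← natCast_zsmul, eq_neg_iff_add_eq_zero.2 hg, ← sum_neg_distrib]
  simp only [neg_smul]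

theorem exists_nsmul_eq_sum_zsmul_of_linearIndependent {ι κ K : Type*} [Fintype ι] [Finite κ]
    [Field K] [CharZero K] {v : ι → κ → ℤ} {z : κ → ℤ} {l : ι → K}
    (hv : LinearIndependent K fun i => ((↑) ∘ v i : κ → K))
    (hz : ((↑) ∘ z : κ → K) = ∑ i, l i • ((↑) ∘ v i : κ → K)) :
    ∃ N : ℕ, 0 < N ∧ ∃ a : ι → ℤ, N • z = ∑ i, a i • v i ∧ ∀ i, (a i : K) = N * l i := by
  have hcast (w : κ → ℤ) : ((↑) ∘ w : κ → K) = algebraMap ℤ K ∘ w := by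
    simp only [algebraMap_int_eq, Int.coe_castRingHom]
  -- Linear (in)dependence of integer vectors is the same over `ℤ` and over `K`.
  have hvZ : LinearIndependent ℤ v := by
    simp only [hcast] at hv
    exact linearIndependent_algebraMap_comp_iff.1 hv
  have hdep : ¬LinearIndependent ℤ fun o : Option ι => o.elim z v := by
    rw [← linearIndependent_algebraMap_comp_iff (S := K), Fintype.not_linearIndependent_iff]
    refine ⟨fun o => o.elim (-1) l, ?_, none, by simp⟩
    simp only [Fintype.sum_option, Option.elim, ← hcast, neg_one_smul, ← hz, neg_add_cancel]
  obtain ⟨N, hN, a, hNz⟩ := hvZ.exists_nsmul_eq_sum_zsmul hdep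
  refine ⟨N, hN, a, hNz, fun i => ?_⟩
  have hNzK : (N : K) • ((↑) ∘ z : κ → K) = ∑ i, (a i : K) • ((↑) ∘ v i : κ → K) := by
    ext j
    simpa [Finset.sum_apply] using congrArg (Int.cast : ℤ → K) (congrFun hNz j)
  rw [hz, smul_sum, ← sub_eq_zero, ← sum_sub_distrib] at hNzK
  simp only [smul_smul, ← sub_smul] at hNzK
  linear_combination -Fintype.linearIndependent_iff.1 hv _ hNzK i

theorem exists_nsmul_eq_sum_nsmul_of_linearIndependent {ι κ K : Type*} [Fintype ι] [Finite κ]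
    [Field K] [LinearOrder K] [IsStrictOrderedRing K] {v : ι → κ → ℤ} {z : κ → ℤ} {l : ι → K}
    (hv : LinearIndependent K fun i => ((↑) ∘ v i : κ → K)) (hl : ∀ i, 0 ≤ l i)
    (hz : ((↑) ∘ z : κ → K) = ∑ i, l i • ((↑) ∘ v i : κ → K)) :
    ∃ N : ℕ, 0 < N ∧ ∃ m : ι → ℕ, N • z = ∑ i, m i • v i := by
  obtain ⟨N, hN, a, hNz, ha⟩ := exists_nsmul_eq_sum_zsmul_of_linearIndependent hv hz
  have ha0 (i : ι) : 0 ≤ a i := by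
    have : (0 : K) ≤ a i := ha i ▸ mul_nonneg N.cast_nonneg (hl i)
    exact_mod_cast this
  refine ⟨N, hN, fun i => (a i).toNat, hNz.trans (sum_congr rfl fun i _ => ?_)⟩
  rw [← natCast_zsmul, Int.toNat_of_nonneg (ha0 i)]

theorem exists_nsmul_mem_closure_of_vec_mem_hull {d : ℕ} {W : Set (Fin d → ℤ)} {z : Fin d → ℤ}
    (h : vec z ∈ PointedCone.hull ℝ (vec '' W)) :
    ∃ N : ℕ, 0 < N ∧ N • z ∈ AddSubmonoid.closure W := by
  obtain ⟨c, hcW, hc0, hcz⟩ := PointedCone.mem_hull_set.1 h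
  obtain ⟨t, htc, l, hl, hind, hsum⟩ :=
    exists_subset_linearIndepOn_sum_eq id c.support c fun x _ => hc0 x
  choose! u huW hu using fun x (hx : x ∈ t) => hcW (htc hx)
  have hcast (x : t) : ((↑) ∘ u x : Fin d → ℝ) = WithLp.ofLp (x : EuclideanSpace ℝ (Fin d)) :=
    congrArg WithLp.ofLp (hu x x.2)
  have hv : LinearIndependent ℝ fun x : t => ((↑) ∘ u x : Fin d → ℝ) := by
    simp only [hcast]
    exact hind.map' (WithLp.linearEquiv 2 ℝ (Fin d → ℝ)).toLinearMap (LinearEquiv.ker _)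
  have hz : ((↑) ∘ z : Fin d → ℝ) = ∑ x : t, l x • ((↑) ∘ u x : Fin d → ℝ) := by
    simp only [hcast]
    calc ((↑) ∘ z : Fin d → ℝ) = WithLp.ofLp (vec z) := rfl
      _ = WithLp.ofLp (∑ x ∈ t, l x • x) := by rw [← hcz]; exact congrArg _ hsum.symm
      _ = _ := by
        rw [WithLp.ofLp_sum]
        exact (sum_coe_sort t fun x => WithLp.ofLp (l x • x)).symm
  obtain ⟨N, hN, m, hm⟩ := exists_nsmul_eq_sum_nsmul_of_linearIndependent hv (fun x => hl x x.2) hz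
  exact ⟨N, hN, hm ▸ sum_mem fun x _ => nsmul_mem (AddSubmonoid.subset_closure (huW x x.2)) _⟩

theorem AddSubmonoid.mem_of_nsmul_mem_of_neg_mem {G : Type*} [AddGroup G] (S : AddSubmonoid G)
    {z : G} {N : ℕ} (hN : 0 < N) (hNz : N • z ∈ S) (hz : -z ∈ S) : z ∈ S := by
  obtain ⟨k, rfl⟩ : ∃ k, N = k + 1 := ⟨N - 1, by omega⟩
  have hsplit : z = (k + 1) • z + k • -z := by
    rw [succ_nsmul', neg_nsmul, add_neg_cancel_right]
  rw [hsplit]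
  exact S.add_mem hNz (S.nsmul_mem hz k)

/-- If `Z ⊆ ℤ^d` contains `0`, is closed under addition, and contains `z` or `-z` for
every `z ∈ ℤ^d`, then either `Z = ℤ^d` or `Z` is contained in a closed half-space
`{q : q·p ≥ 0}` for some `p ≠ 0`. -/
theorem stmt2 (d : ℕ) (Z : Set (Fin d → ℤ)) (h0 : 0 ∈ Z)
    (hadd : ∀ z₁ ∈ Z, ∀ z₂ ∈ Z, z₁ + z₂ ∈ Z)
    (hall : ∀ z : Fin d → ℤ, z ∈ Z ∨ -z ∈ Z) :
    Z = Set.univ ∨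
      ∃ p : EuclideanSpace ℝ (Fin d), p ≠ 0 ∧ ∀ q ∈ Z, 0 ≤ ⟪vec q, p⟫ := by
  let M : AddSubmonoid (Fin d → ℤ) :=
    { carrier := Z, add_mem' := fun ha hb => hadd _ ha _ hb, zero_mem' := h0 }
  rcases PointedCone.hull_eq_top_or_exists_inner_nonneg (vec '' Z) with htop | ⟨p, hp, hpZ⟩
  · refine .inl (Set.eq_univ_of_forall fun z => ?_)
    obtain ⟨N, hN, hNz⟩ := exists_nsmul_mem_closure_of_vec_mem_hull (htop ▸ Submodule.mem_top)
    have hNzM : N • z ∈ M := AddSubmonoid.closure_le.2 subset_rfl hNz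
    exact (hall z).elim id (M.mem_of_nsmul_mem_of_neg_mem hN hNzM)
  · exact .inr ⟨p, hp, fun q hq => hpZ _ (Set.mem_image_of_mem vec hq)⟩
end

section
/- Let p ∈ ℝ^d and let E ⊆ ℝ^d satisfy E + q ⊆ E for every q ∈ ℤ^d with q·p > 0. If a + [0,1)^d ⊆ E for some a ∈ ℝ^d, then E contains the half-space {x ∈ ℝ^d : x·p > a·p + Σ_{i=1}^d |p_i|}. -/
open scoped RealInnerProductSpace

/-- The half-open unit cube `[0,1)^d` in `ℝ^d`. -/
def cube (d : ℕ) : Set (EuclideanSpace ℝ (Fin d)) :=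
  {r | ∀ i, r i ∈ Set.Ico (0 : ℝ) 1}

/-!
Write `x - a = r + q` with `r = fract (x - a) ∈ [0,1)^d` and `q = ⌊x - a⌋ ∈ ℤ^d`. Since
`r·p ≤ Σᵢ |pᵢ|`, the hypothesis `x·p > a·p + Σᵢ |pᵢ|` forces `q·p > 0`, so
`x = (a + r) + q ∈ E + q ⊆ E`.
-/

theorem exists_mem_cube_add_vec {d : ℕ} (y : EuclideanSpace ℝ (Fin d)) :
    ∃ r ∈ cube d, ∃ q : Fin d → ℤ, y = r + vec q := by
  refine ⟨WithLp.toLp 2 fun i => Int.fract (y i), fun i => ⟨Int.fract_nonneg _, Int.fract_lt_one _⟩,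
    fun i => ⌊y i⌋, ?_⟩
  ext i
  simp [vec, Int.fract_add_floor]

theorem inner_le_sum_abs_of_mem_cube {d : ℕ} {r : EuclideanSpace ℝ (Fin d)} (hr : r ∈ cube d)
    (p : EuclideanSpace ℝ (Fin d)) : ⟪r, p⟫ ≤ ∑ i, |p i| := by
  rw [PiLp.inner_apply]
  refine Finset.sum_le_sum fun i _ => ?_
  obtain ⟨hr₀, hr₁⟩ := hr i
  calc ⟪r i, p i⟫ = r i * p i := by simp [mul_comm]
    _ ≤ r i * |p i| := mul_le_mul_of_nonneg_left (le_abs_self _) hr₀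
    _ ≤ |p i| := mul_le_of_le_one_left (abs_nonneg _) hr₁.le

/-- If `E + q ⊆ E` whenever `q·p > 0` and `E` contains a half-open unit cube
`a + [0,1)^d`, then `E` contains the half-space `{x : x·p > a·p + Σᵢ |pᵢ|}`. -/
theorem stmt5 (d : ℕ) (p : EuclideanSpace ℝ (Fin d)) (E : Set (EuclideanSpace ℝ (Fin d)))
    (hE : ∀ q : Fin d → ℤ, 0 < ⟪vec q, p⟫ → transl E q ⊆ E)
    (a : EuclideanSpace ℝ (Fin d)) (ha : (fun r => a + r) '' cube d ⊆ E) :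
    {x : EuclideanSpace ℝ (Fin d) | ⟪a, p⟫ + ∑ i, |p i| < ⟪x, p⟫} ⊆ E := by
  intro x hx
  obtain ⟨r, hr, q, hxa⟩ := exists_mem_cube_add_vec (x - a)
  have hx_eq : x = a + r + vec q := by rw [add_assoc, ← hxa, add_sub_cancel]
  have hqp : 0 < ⟪vec q, p⟫ := by
    have := inner_le_sum_abs_of_mem_cube hr p
    rw [Set.mem_ofPred_eq, hx_eq, inner_add_left, inner_add_left] at hx
    linarith
  exact hE q hqp ⟨a + r, ha ⟨r, hr, rfl⟩, hx_eq.symm⟩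
end

section
/- Let p ∈ ℝ^d and let E ⊆ ℝ^d satisfy E ⊆ E + q for every q ∈ ℤ^d with q·p < 0. If (a + [0,1)^d) ∩ E = ∅ for some a ∈ ℝ^d, then E ∩ {x ∈ ℝ^d : x·p < a·p − Σ_{i=1}^d |p_i|} = ∅. -/
/-! For `x` in the half-space, the integer vector `q = ⌊x - a⌋` satisfies
`q·p ≤ (x - a)·p + Σᵢ |pᵢ| < 0`, so `x ∈ E + q`, i.e. `x - q ∈ E`; but
`x - q - a` is the fractional part of `x - a`, so `x - q` lies in the cube `a + [0,1)^d`. -/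

open scoped RealInnerProductSpace

lemma Int.floor_mul_le_mul_add_abs {α : Type*} [CommRing α] [LinearOrder α]
    [IsStrictOrderedRing α] [FloorRing α] (t s : α) : ⌊t⌋ * s ≤ t * s + |s| := by
  have hfract : (t - ⌊t⌋) * -s ≤ |s| := calc
    (t - ⌊t⌋) * -s ≤ |(t - ⌊t⌋) * -s| := le_abs_self _
    _ = Int.fract t * |s| := by
      rw [abs_mul, abs_neg, Int.self_sub_floor, abs_of_nonneg (Int.fract_nonneg t)]
    _ ≤ |s| := mul_le_of_le_one_left (abs_nonneg s) (Int.fract_lt_one t).le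
  linear_combination hfract

section Lattice

variable {d : ℕ}

lemma inner_vec (q : Fin d → ℤ) (p : EuclideanSpace ℝ (Fin d)) :
    ⟪vec q, p⟫ = ∑ i, (q i : ℝ) * p i := by
  simp [vec, PiLp.inner_apply, mul_comm]

lemma inner_vec_floor_le (v p : EuclideanSpace ℝ (Fin d)) :
    ⟪vec (fun i => ⌊v i⌋), p⟫ ≤ ⟪v, p⟫ + ∑ i, |p i| := calc
  ⟪vec (fun i => ⌊v i⌋), p⟫ = ∑ i, (⌊v i⌋ : ℝ) * p i := inner_vec _ p
  _ ≤ ∑ i, (v i * p i + |p i|) := Finset.sum_le_sum fun i _ => Int.floor_mul_le_mul_add_abs _ _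
  _ = ⟪v, p⟫ + ∑ i, |p i| := by
    simp [Finset.sum_add_distrib, PiLp.inner_apply, mul_comm]

lemma sub_vec_floor_mem_cube (v : EuclideanSpace ℝ (Fin d)) :
    v - vec (fun i => ⌊v i⌋) ∈ cube d := fun i =>
  ⟨Int.fract_nonneg (v i), Int.fract_lt_one (v i)⟩

end Lattice

/-- If `E ⊆ E + q` whenever `q·p < 0` and `E` avoids a half-open unit cube
`a + [0,1)^d`, then `E` avoids the half-space `{x : x·p < a·p − Σᵢ |pᵢ|}`. -/
theorem stmt6 (d : ℕ) (p : EuclideanSpace ℝ (Fin d)) (E : Set (EuclideanSpace ℝ (Fin d)))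
    (hE : ∀ q : Fin d → ℤ, ⟪vec q, p⟫ < 0 → E ⊆ transl E q)
    (a : EuclideanSpace ℝ (Fin d)) (ha : ((fun r => a + r) '' cube d) ∩ E = ∅) :
    E ∩ {x : EuclideanSpace ℝ (Fin d) | ⟪x, p⟫ < ⟪a, p⟫ - ∑ i, |p i|} = ∅ := by
  refine Set.eq_empty_iff_forall_notMem.mpr fun x ⟨hx, hxp⟩ => ?_
  set q : Fin d → ℤ := fun i => ⌊(x - a) i⌋
  have hqp : ⟪vec q, p⟫ < 0 := by
    have := inner_vec_floor_le (x - a) p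
    rw [inner_sub_left] at this
    exact this.trans_lt (by linarith [hxp.out])
  obtain ⟨y, hy, hyx⟩ := hE q hqp hx
  have hya : y - a = x - a - vec q := by rw [← hyx]; simp only; abel
  refine Set.eq_empty_iff_forall_notMem.mp ha y ⟨⟨y - a, ?_, add_sub_cancel a y⟩, hy⟩
  exact hya ▸ sub_vec_floor_mem_cube (x - a)
end

section
/- Let E_n (n ∈ ℕ) and E be open subsets of ℝ^d and let γ > 0 be such that: (i) for every n, every x ∈ closure(E_n) and every r > 0, |B_r(x) ∩ E_n| ≥ γ r^d, and for every x ∉ E_n and every r > 0, |B_r(x) \ E_n| ≥ γ r^d; (ii) the set E satisfies the same two density estimates; (iii) for every R > 0, the Lebesgue measure |(E_n Δ E) ∩ B_R(0)| tends to 0 as n → ∞. Then the topological boundaries ∂E_n converge to ∂E in the Kuratowski (local Hausdorff) sense: for every ε > 0 and R > 0 there is N such that for all n ≥ N, ∂E_n ∩ B_R(0) ⊆ ⋃_{y ∈ ∂E} B_ε(y) and ∂E ∩ B_R(0) ⊆ ⋃_{y ∈ ∂E_n} B_ε(y). -/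
/-!
Suppose `x ∈ ∂A` stays at distance at least `ε` from `∂B`. The ball `B_ε(x)` is connected and
misses `∂B`, so it lies either inside `B` or outside `B`. In the first case the exterior density
estimate of `A` at `x`, in the second the interior one, puts a mass `γ ε^d` of `A Δ B` inside
`B_ε(x) ⊆ B_{R+ε}(0)`. Since `|(A_n Δ B_n) ∩ B_{R+ε}(0)| → 0`, this is eventually impossible.
-/

open MeasureTheory Metric Filter Topology Set
open scoped symmDiff

theorem IsPreconnected.subset_or_disjoint_of_disjoint_frontier {X : Type*} [TopologicalSpace X]
    {s t : Set X} (hs : IsPreconnected s) (hst : Disjoint s (frontier t)) :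
    s ⊆ t ∨ Disjoint s t := by
  have hcover : s ⊆ interior t ∪ (closure t)ᶜ := fun y hy => by
    by_cases hyt : y ∈ interior t
    · exact Or.inl hyt
    · exact Or.inr fun hyc => hst.ne_of_mem hy ⟨hyc, hyt⟩ rfl
  rcases hs.subset_or_subset isOpen_interior isClosed_closure.isOpen_compl
    (disjoint_compl_right.mono_left interior_subset_closure) hcover with hint | hext
  · exact Or.inl (hint.trans interior_subset)
  · exact Or.inr (disjoint_compl_left.mono hext subset_closure)

structure HasDensityEstimates {X : Type*} [PseudoMetricSpace X] [MeasurableSpace X]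
    (μ : Measure X) (γ : ℝ) (d : ℕ) (A : Set X) : Prop where
  le_measure_ball_inter : ∀ x ∈ closure A, ∀ r > (0 : ℝ),
    ENNReal.ofReal (γ * r ^ d) ≤ μ (ball x r ∩ A)
  le_measure_ball_diff : ∀ x ∉ A, ∀ r > (0 : ℝ),
    ENNReal.ofReal (γ * r ^ d) ≤ μ (ball x r \ A)

section NormedSpace

variable {X : Type*} [NormedAddCommGroup X] [NormedSpace ℝ X] [MeasurableSpace X]
  {μ : Measure X} {γ : ℝ} {d : ℕ}

theorem HasDensityEstimates.le_measure_symmDiff_inter_ball {A B : Set X}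
    (hAd : HasDensityEstimates μ γ d A) (hA : IsOpen A) {x : X} (hx : x ∈ frontier A) {r : ℝ}
    (hr : 0 < r) (hB : Disjoint (ball x r) (frontier B)) :
    ENNReal.ofReal (γ * r ^ d) ≤ μ ((A ∆ B) ∩ ball x r) := by
  rw [hA.frontier_eq] at hx
  rcases (convex_ball x r).isPreconnected.subset_or_disjoint_of_disjoint_frontier hB with
    hsub | hdisj
  · calc ENNReal.ofReal (γ * r ^ d) ≤ μ (ball x r \ A) := hAd.le_measure_ball_diff x hx.2 r hr
      _ ≤ μ ((A ∆ B) ∩ ball x r) :=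
        measure_mono fun y ⟨hy, hyA⟩ => ⟨Or.inr ⟨hsub hy, hyA⟩, hy⟩
  · calc ENNReal.ofReal (γ * r ^ d) ≤ μ (ball x r ∩ A) := hAd.le_measure_ball_inter x hx.1 r hr
      _ ≤ μ ((A ∆ B) ∩ ball x r) :=
        measure_mono fun y ⟨hy, hyA⟩ => ⟨Or.inl ⟨hyA, hdisj.notMem_of_mem_left hy⟩, hy⟩

theorem eventually_frontier_inter_ball_subset_thickening {ι : Type*} {l : Filter ι}
    {A B : ι → Set X} (hAd : ∀ i, HasDensityEstimates μ γ d (A i)) (hA : ∀ i, IsOpen (A i))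
    (hγ : 0 < γ) (z : X) {R ε : ℝ} (hε : 0 < ε)
    (hconv : Tendsto (fun i => μ ((A i ∆ B i) ∩ ball z (R + ε))) l (𝓝 0)) :
    ∀ᶠ i in l, frontier (A i) ∩ ball z R ⊆ thickening ε (frontier (B i)) := by
  have hpos : 0 < ENNReal.ofReal (γ * ε ^ d) := ENNReal.ofReal_pos.mpr (by positivity)
  filter_upwards [hconv.eventually (gt_mem_nhds hpos)] with i hsmall
  rintro x ⟨hxA, hxR⟩
  by_contra hxB
  have hdisj : Disjoint (ball x ε) (frontier (B i)) := by
    refine disjoint_left.mpr fun y hy hyB => hxB (mem_thickening_iff.mpr ⟨y, hyB, ?_⟩)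
    rwa [dist_comm, ← mem_ball]
  have hball : ball x ε ⊆ ball z (R + ε) := fun y hy => by
    rw [mem_ball] at hxR hy ⊢
    linarith [dist_triangle y x z]
  exact hsmall.not_ge ((hAd i).le_measure_symmDiff_inter_ball (hA i) hxA hε hdisj |>.trans
    (measure_mono (inter_subset_inter_right _ hball)))

end NormedSpace

/-- Kuratowski (local Hausdorff) convergence of boundaries: if open sets `Eₙ` and `E`
satisfy uniform interior/exterior density estimates with constant `γ > 0`, and
`|(Eₙ Δ E) ∩ B_R(0)| → 0` for every `R > 0`, then for every `ε > 0` and `R > 0` the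
boundaries `∂Eₙ ∩ B_R(0)` and `∂E ∩ B_R(0)` are eventually within `ε` of each other. -/
theorem stmt7 (d : ℕ) (En : ℕ → Set (EuclideanSpace ℝ (Fin d)))
    (E : Set (EuclideanSpace ℝ (Fin d)))
    (hEnopen : ∀ n, IsOpen (En n)) (hEopen : IsOpen E)
    (γ : ℝ) (hγ : 0 < γ)
    (hin : ∀ n, ∀ x ∈ closure (En n), ∀ r > (0 : ℝ),
      ENNReal.ofReal (γ * r ^ d) ≤ volume (Metric.ball x r ∩ En n))
    (hout : ∀ n, ∀ x ∉ En n, ∀ r > (0 : ℝ),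
      ENNReal.ofReal (γ * r ^ d) ≤ volume (Metric.ball x r \ En n))
    (hin' : ∀ x ∈ closure E, ∀ r > (0 : ℝ),
      ENNReal.ofReal (γ * r ^ d) ≤ volume (Metric.ball x r ∩ E))
    (hout' : ∀ x ∉ E, ∀ r > (0 : ℝ),
      ENNReal.ofReal (γ * r ^ d) ≤ volume (Metric.ball x r \ E))
    (hconv : ∀ R > (0 : ℝ), Filter.Tendsto
      (fun n => volume (((En n \ E) ∪ (E \ En n)) ∩ Metric.ball 0 R))
      Filter.atTop (nhds 0)) :
    ∀ ε > (0 : ℝ), ∀ R > (0 : ℝ), ∃ N : ℕ, ∀ n ≥ N,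
      (frontier (En n) ∩ Metric.ball 0 R ⊆ ⋃ y ∈ frontier E, Metric.ball y ε) ∧
      (frontier E ∩ Metric.ball 0 R ⊆ ⋃ y ∈ frontier (En n), Metric.ball y ε) := by
  intro ε hε R hR
  have hconvR : Tendsto (fun n => volume ((En n ∆ E) ∩ ball 0 (R + ε))) atTop (𝓝 0) :=
    hconv (R + ε) (by linarith)
  have hEn := eventually_frontier_inter_ball_subset_thickening
    (fun n => ⟨hin n, hout n⟩) hEnopen hγ 0 hε hconvR
  have hE := eventually_frontier_inter_ball_subset_thickening (A := fun _ => E) (B := En)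
    (fun _ => ⟨hin', hout'⟩) (fun _ => hEopen) hγ 0 hε (by simpa only [symmDiff_comm E])
  obtain ⟨N, hN⟩ := eventually_atTop.mp (hEn.and hE)
  exact ⟨N, fun n hn => by simpa only [← thickening_eq_biUnion_ball] using hN n hn⟩
end

section
/- Let F : ℝ^d → ℝ be convex, positively one-homogeneous, satisfy c₀|y| ≤ F(y) ≤ c₀⁻¹|y| for all y and some c₀ > 0, be differentiable on ℝ^d \ {0}, and be uniformly convex in the sense that there exists C > 0 with F(y)² ≥ F(z)² + 2 F(z) ⟨∇F(z), y − z⟩ + C|y − z|² for all y ∈ ℝ^d and z ≠ 0. Let ∂W := {y ∈ ℝ^d : F(y) = 1}. If η is a Borel probability measure on ℝ^d concentrated on ∂W whose barycenter θ := ∫_{ℝ^d} y dη(y) satisfies F(θ) = 1, then η is the Dirac mass δ_θ. -/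
/-!
Write `θ` for the barycenter of `η` and `g = ∇F(θ)`. For `η`-a.e. `y` we have `F y = F θ = 1`,
so uniform convexity at `θ` reads `2 ⟪g, y - θ⟫ + C ‖y - θ‖² ≤ 0`. The linear term has
`η`-integral zero because `θ` is the barycenter, hence `∫ ‖y - θ‖² dη ≤ 0` and `η` sits at `θ`.
-/

open MeasureTheory
open scoped RealInnerProductSpace

lemma MeasureTheory.Measure.eq_dirac_of_ae_eq {α : Type*} [MeasurableSpace α] {μ : Measure α}
    [IsProbabilityMeasure μ] {x : α} (h : ∀ᵐ y ∂μ, y = x) : μ = Measure.dirac x := by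
  simpa using (ProbabilityTheory.hasLaw_dirac_of_ae_eq (X := id) h).map_eq

section Barycenter

variable {E : Type*} [NormedAddCommGroup E] [InnerProductSpace ℝ E] [CompleteSpace E]
  [MeasurableSpace E] {η : Measure E} [IsProbabilityMeasure η]

lemma integral_inner_sub_barycenter (hη : Integrable (fun y ↦ y) η) (g : E) :
    ∫ y, ⟪g, y - ∫ x, x ∂η⟫ ∂η = 0 := by
  rw [integral_inner (f := fun y ↦ y - ∫ x, x ∂η) (hη.sub (integrable_const _)),
    integral_sub hη (integrable_const _)]
  simp

lemma eq_dirac_barycenter_of_sq_le_inner [OpensMeasurableSpace E]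
    (hη : Integrable (fun y ↦ y) η) {C : ℝ} (hC : 0 < C) (g : E)
    (h : ∀ᵐ y ∂η, C * ‖y - ∫ x, x ∂η‖ ^ 2 ≤ ⟪g, y - ∫ x, x ∂η⟫) :
    η = Measure.dirac (∫ x, x ∂η) := by
  set θ := ∫ x, x ∂η
  have h_inner : Integrable (fun y ↦ ⟪g, y - θ⟫) η :=
    (hη.sub (integrable_const θ)).const_inner g
  have h_sq : Integrable (fun y ↦ ‖y - θ‖ ^ 2) η := by
    refine (h_inner.div_const C).mono'
      ((continuous_id.sub continuous_const).norm.pow 2).aestronglyMeasurable ?_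
    filter_upwards [h] with y hy
    rw [Real.norm_of_nonneg (by positivity), le_div_iff₀ hC]
    linarith
  have h_int_le : C * ∫ y, ‖y - θ‖ ^ 2 ∂η ≤ 0 := by
    rw [← integral_const_mul, ← integral_inner_sub_barycenter hη g]
    exact integral_mono_ae (h_sq.const_mul C) h_inner h
  have h_int_zero : ∫ y, ‖y - θ‖ ^ 2 ∂η = 0 :=
    le_antisymm (nonpos_of_mul_nonpos_right h_int_le hC) (integral_nonneg fun _ ↦ by positivity)
  refine Measure.eq_dirac_of_ae_eq ?_
  filter_upwards [(integral_eq_zero_iff_of_nonneg (fun _ ↦ by positivity) h_sq).mp h_int_zero]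
    with y hy
  simpa [sub_eq_zero] using hy

end Barycenter

lemma map_zero_of_homogeneous {E : Type*} [AddCommGroup E] [Module ℝ E] {F : E → ℝ}
    (hhom : ∀ lam : ℝ, 0 < lam → ∀ y, F (lam • y) = lam * F y) : F 0 = 0 := by
  have := hhom 2 two_pos 0
  rw [smul_zero] at this
  linarith

theorem stmt10_general (d : ℕ) (F : EuclideanSpace ℝ (Fin d) → ℝ)
    (hhom : ∀ lam : ℝ, 0 < lam → ∀ y, F (lam • y) = lam * F y)
    (C : ℝ) (hC : 0 < C)
    (huc : ∀ y z : EuclideanSpace ℝ (Fin d), z ≠ 0 →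
      F z ^ 2 + 2 * F z * ⟪gradient F z, y - z⟫ + C * ‖y - z‖ ^ 2 ≤ F y ^ 2)
    (η : Measure (EuclideanSpace ℝ (Fin d))) [IsProbabilityMeasure η]
    (hconc : η {y | F y ≠ 1} = 0)
    (θ : EuclideanSpace ℝ (Fin d)) (hθ : θ = ∫ y, y ∂η) (hFθ : F θ = 1) :
    η = Measure.dirac θ := by
  have hθ0 : θ ≠ 0 := by
    rintro rfl
    simp [map_zero_of_homogeneous hhom] at hFθ
  -- The Bochner integral of a non-integrable function is `0`.
  have hη : Integrable (fun y ↦ y) η := .of_integral_ne_zero (hθ ▸ hθ0)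
  subst hθ
  refine eq_dirac_barycenter_of_sq_le_inner hη hC ((-2 : ℝ) • gradient F (∫ y, y ∂η)) ?_
  filter_upwards [measure_eq_zero_iff_ae_notMem.mp hconc] with y hy
  have hFy : F y = 1 := not_not.mp hy
  have h_uc := huc y _ hθ0
  rw [hFθ, hFy] at h_uc
  rw [real_inner_smul_left]
  linarith

/-- If `F` is a convex, positively one-homogeneous, coercive, differentiable (away from
`0`) and uniformly convex anisotropy, and `η` is a Borel probability measure concentrated
on the unit sphere `{F = 1}` whose barycenter `θ` satisfies `F(θ) = 1`, then `η` is the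
Dirac mass at `θ`. -/
theorem stmt10 (d : ℕ) (F : EuclideanSpace ℝ (Fin d) → ℝ)
    (c₀ : ℝ) (hc₀ : 0 < c₀)
    (hconv : ConvexOn ℝ Set.univ F)
    (hhom : ∀ lam : ℝ, 0 < lam → ∀ y, F (lam • y) = lam * F y)
    (hbound : ∀ y, c₀ * ‖y‖ ≤ F y ∧ F y ≤ c₀⁻¹ * ‖y‖)
    (hdiff : ∀ z : EuclideanSpace ℝ (Fin d), z ≠ 0 → DifferentiableAt ℝ F z)
    (C : ℝ) (hC : 0 < C)
    (huc : ∀ y z : EuclideanSpace ℝ (Fin d), z ≠ 0 →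
      F z ^ 2 + 2 * F z * ⟪gradient F z, y - z⟫ + C * ‖y - z‖ ^ 2 ≤ F y ^ 2)
    (η : Measure (EuclideanSpace ℝ (Fin d))) [IsProbabilityMeasure η]
    (hconc : η {y | F y ≠ 1} = 0)
    (θ : EuclideanSpace ℝ (Fin d)) (hθ : θ = ∫ y, y ∂η) (hFθ : F θ = 1) :
    η = Measure.dirac θ :=
  stmt10_general d F hhom C hC huc η hconc θ hθ hFθ
end

section
/- Let F : ℝ^d × ℝ^d → ℝ be continuous, and for each x let F(x, ·) be convex and positively one-homogeneous. Let M > 0 and let z_n, z : ℝ^d → ℝ^d be measurable with |z_n(x)| ≤ M and |z(x)| ≤ M for a.e. x. Assume that for each n one has ⟨z_n(x), q⟩ ≤ F(x, q) for a.e. x ∈ ℝ^d and every q ∈ ℝ^d, and that for every open ball B ⊆ ℝ^d and every q ∈ ℝ^d, ∫_B ⟨z_n(x), q⟩ dx → ∫_B ⟨z(x), q⟩ dx as n → ∞. Then ⟨z(x), q⟩ ≤ F(x, q) for a.e. x ∈ ℝ^d and every q ∈ ℝ^d. -/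
open MeasureTheory
open scoped RealInnerProductSpace

open Filter Metric Topology

/-!
For a fixed `q`, the constraint `⟪zₙ, q⟫ ≤ F(·, q)` integrates to `∫_B ⟪zₙ, q⟫ ≤ ∫_B F(·, q)` on
every ball `B`, and weak convergence passes this to `z`. Lebesgue differentiation turns the
inequality on all balls into an a.e. inequality. Finally, for each `x` the set of `q` satisfying
the constraint is closed, so it is enough to know it on a countable dense set of `q`, which costs
only countably many null sets.
-/

theorem closedBall_ae_eq_ball_of_ne_zero {E : Type*} [NormedAddCommGroup E] [NormedSpace ℝ E]
    [MeasurableSpace E] [BorelSpace E] [FiniteDimensional ℝ E] (μ : Measure E)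
    [μ.IsAddHaarMeasure] (x : E) {r : ℝ} (hr : r ≠ 0) : closedBall x r =ᵐ[μ] ball x r :=
  ae_eq_set.2 ⟨by rw [closedBall_sdiff_ball]; exact μ.addHaar_sphere_of_ne_zero x hr,
    by rw [Set.sdiff_eq_empty.2 ball_subset_closedBall, measure_empty]⟩

theorem MeasureTheory.LocallyIntegrable.integrableOn_ball {X E : Type*} [PseudoMetricSpace X] [ProperSpace X]
    [MeasurableSpace X] [NormedAddCommGroup E] {μ : Measure X} {f : X → E}
    (hf : LocallyIntegrable f μ) (c : X) (r : ℝ) : IntegrableOn f (ball c r) μ :=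
  (hf.integrableOn_isCompact (isCompact_closedBall c r)).mono_set ball_subset_closedBall

theorem ae_nonneg_of_forall_setIntegral_closedBall_nonneg {α : Type*} [PseudoMetricSpace α]
    [MeasurableSpace α] [SecondCountableTopology α] [BorelSpace α] {μ : Measure α}
    [IsLocallyFiniteMeasure μ] [IsUnifLocDoublingMeasure μ] {g : α → ℝ}
    (hg : LocallyIntegrable g μ) (h : ∀ x, ∀ r > 0, 0 ≤ ∫ y in closedBall x r, g y ∂μ) :
    0 ≤ᵐ[μ] g := by
  filter_upwards [IsUnifLocDoublingMeasure.ae_tendsto_average μ hg 1] with x hx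
  have hlim : Tendsto (fun r => ⨍ y in closedBall x r, g y ∂μ) (𝓝[>] 0) (𝓝 (g x)) :=
    hx (fun _ => x) id tendsto_id <| eventually_mem_nhdsWithin.mono fun r hr => by
      simpa using (Set.mem_Ioi.1 hr).le
  refine ge_of_tendsto hlim <| eventually_mem_nhdsWithin.mono fun r hr => ?_
  rw [setAverage_eq]
  exact smul_nonneg (inv_nonneg.2 measureReal_nonneg) (h x r hr)

theorem ae_le_of_forall_setIntegral_ball_le {E : Type*} [NormedAddCommGroup E]
    [NormedSpace ℝ E] [MeasurableSpace E] [BorelSpace E] [FiniteDimensional ℝ E]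
    {μ : Measure E} [μ.IsAddHaarMeasure] {f g : E → ℝ}
    (hf : LocallyIntegrable f μ) (hg : LocallyIntegrable g μ)
    (h : ∀ c r, 0 < r → ∫ x in ball c r, f x ∂μ ≤ ∫ x in ball c r, g x ∂μ) : f ≤ᵐ[μ] g := by
  have hnonneg : 0 ≤ᵐ[μ] g - f := by
    refine ae_nonneg_of_forall_setIntegral_closedBall_nonneg (hg.sub hf) fun c r hr => ?_
    rw [setIntegral_congr_set (closedBall_ae_eq_ball_of_ne_zero μ c hr.ne'), Pi.sub_def,
      integral_sub (hg.integrableOn_ball c r) (hf.integrableOn_ball c r), sub_nonneg]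
    exact h c r hr
  filter_upwards [hnonneg] with x hx
  exact sub_nonneg.1 hx

theorem ae_forall_of_forall_ae_of_isClosed {α β : Type*} [MeasurableSpace α] {μ : Measure α}
    [TopologicalSpace β] [TopologicalSpace.SeparableSpace β] {p : α → β → Prop}
    (h : ∀ q, ∀ᵐ x ∂μ, p x q) (hp : ∀ x, IsClosed {q | p x q}) : ∀ᵐ x ∂μ, ∀ q, p x q := by
  obtain ⟨s, hs_count, hs_dense⟩ := TopologicalSpace.exists_countable_dense β
  filter_upwards [(ae_ball_iff hs_count).2 fun q _ => h q] with x hx q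
  exact (hp x).closure_subset_iff.2 hx (hs_dense q)

theorem stmt12_general (d : ℕ)
    (F : EuclideanSpace ℝ (Fin d) → EuclideanSpace ℝ (Fin d) → ℝ)
    (hFcont : Continuous fun pr : EuclideanSpace ℝ (Fin d) × EuclideanSpace ℝ (Fin d) =>
      F pr.1 pr.2)
    (M : ℝ)
    (zn : ℕ → EuclideanSpace ℝ (Fin d) → EuclideanSpace ℝ (Fin d))
    (z : EuclideanSpace ℝ (Fin d) → EuclideanSpace ℝ (Fin d))
    (hznmeas : ∀ n, Measurable (zn n)) (hzmeas : Measurable z)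
    (hznbound : ∀ n, ∀ᵐ x ∂volume, ‖zn n x‖ ≤ M)
    (hzbound : ∀ᵐ x ∂volume, ‖z x‖ ≤ M)
    (hconstraint : ∀ n, ∀ᵐ x ∂volume, ∀ q, ⟪zn n x, q⟫ ≤ F x q)
    (hweak : ∀ (c : EuclideanSpace ℝ (Fin d)) (r : ℝ), 0 < r →
      ∀ q : EuclideanSpace ℝ (Fin d),
      Filter.Tendsto (fun n => ∫ x in Metric.ball c r, ⟪zn n x, q⟫ ∂volume)
        Filter.atTop (nhds (∫ x in Metric.ball c r, ⟪z x, q⟫ ∂volume))) :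
    ∀ᵐ x ∂volume, ∀ q, ⟪z x, q⟫ ≤ F x q := by
  have hF_loc : ∀ q, LocallyIntegrable (F · q) volume := fun q =>
    (hFcont.comp (continuous_id.prodMk continuous_const)).locallyIntegrable
  have hinner_loc : ∀ w : EuclideanSpace ℝ (Fin d) → EuclideanSpace ℝ (Fin d), Measurable w →
      (∀ᵐ x ∂volume, ‖w x‖ ≤ M) → ∀ q, LocallyIntegrable (⟪w ·, q⟫) volume :=
    fun w hw hwM q => ((memLp_top_of_bound hw.aestronglyMeasurable M hwM).inner_const q
      ).locallyIntegrable le_top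
  have hfixed : ∀ q, ∀ᵐ x ∂volume, ⟪z x, q⟫ ≤ F x q := fun q =>
    ae_le_of_forall_setIntegral_ball_le (hinner_loc z hzmeas hzbound q) (hF_loc q)
      fun c r hr => le_of_tendsto' (hweak c r hr q) fun n =>
        setIntegral_mono_ae ((hinner_loc _ (hznmeas n) (hznbound n) q).integrableOn_ball c r)
          ((hF_loc q).integrableOn_ball c r) ((hconstraint n).mono fun x hx => hx q)
  exact ae_forall_of_forall_ae_of_isClosed hfixed fun x =>
    isClosed_le (continuous_const.inner continuous_id)
      (hFcont.comp (continuous_const.prodMk continuous_id))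

/-- The pointwise constraint `⟨z(x), q⟩ ≤ F(x, q)` (i.e. `F°(x, z(x)) ≤ 1`) is preserved
under weak-* convergence of uniformly bounded vector fields `zₙ ⇀ z`. -/
theorem stmt12 (d : ℕ)
    (F : EuclideanSpace ℝ (Fin d) → EuclideanSpace ℝ (Fin d) → ℝ)
    (hFcont : Continuous fun pr : EuclideanSpace ℝ (Fin d) × EuclideanSpace ℝ (Fin d) =>
      F pr.1 pr.2)
    (hFconv : ∀ x, ConvexOn ℝ Set.univ (F x))
    (hFhom : ∀ x, ∀ lam : ℝ, 0 < lam → ∀ q, F x (lam • q) = lam * F x q)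
    (M : ℝ) (hM : 0 < M)
    (zn : ℕ → EuclideanSpace ℝ (Fin d) → EuclideanSpace ℝ (Fin d))
    (z : EuclideanSpace ℝ (Fin d) → EuclideanSpace ℝ (Fin d))
    (hznmeas : ∀ n, Measurable (zn n)) (hzmeas : Measurable z)
    (hznbound : ∀ n, ∀ᵐ x ∂volume, ‖zn n x‖ ≤ M)
    (hzbound : ∀ᵐ x ∂volume, ‖z x‖ ≤ M)
    (hconstraint : ∀ n, ∀ᵐ x ∂volume, ∀ q, ⟪zn n x, q⟫ ≤ F x q)
    (hweak : ∀ (c : EuclideanSpace ℝ (Fin d)) (r : ℝ), 0 < r →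
      ∀ q : EuclideanSpace ℝ (Fin d),
      Filter.Tendsto (fun n => ∫ x in Metric.ball c r, ⟪zn n x, q⟫ ∂volume)
        Filter.atTop (nhds (∫ x in Metric.ball c r, ⟪z x, q⟫ ∂volume))) :
    ∀ᵐ x ∂volume, ∀ q, ⟪z x, q⟫ ≤ F x q :=
  stmt12_general d F hFcont M zn z hznmeas hzmeas hznbound hzbound hconstraint hweak
end

section
/- Let p ∈ ℝ^d be irrational (p ∉ ℝ·ℤ^d) and let v : ℝ^d → ℝ be ℤ^d-periodic. Then for every t ∈ ℝ one has the identity of superlevel sets {x ∈ ℝ^d : v(x) + p·x > t} = ⋃_{q ∈ ℤ^d, q·p > t} ( q + {x ∈ ℝ^d : v(x) + p·x > 0} ). -/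
/-!
If `p` is irrational, the subgroup `{q·p : q ∈ ℤ^d}` of `ℝ` is not cyclic, hence dense. So whenever
`v(x) + p·x > t` there is `q` with `t < q·p < v(x) + p·x`, and by periodicity `x - q` lies in the
superlevel set at `0`. The reverse inclusion is the same periodicity computation.
-/

open scoped RealInnerProductSpace

theorem setOf_lt_eq_iUnion_image_add {E ι : Type*} [AddCommGroup E] (u : E → ℝ) (g : ι → E)
    (c : ι → ℝ) (hu : ∀ x q, u (x + g q) = u x + c q) (hc : Dense (Set.range c)) (t : ℝ) :
    {x | t < u x} = ⋃ q ∈ {q | t < c q}, (fun x => g q + x) '' {x | 0 < u x} := by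
  ext x
  simp only [Set.mem_ofPred_eq, Set.mem_iUnion, Set.mem_image, exists_prop]
  constructor
  · intro hx
    obtain ⟨_, ⟨q, rfl⟩, htq, hqx⟩ := hc.exists_between hx
    have hshift : u x = u (x - g q) + c q := by simpa using hu (x - g q) q
    exact ⟨q, htq, x - g q, by linarith, add_sub_cancel _ _⟩
  · rintro ⟨q, htq, y, hy, rfl⟩
    rw [add_comm, hu]
    linarith

namespace vec

variable {d : ℕ}

theorem inner_eq_sum (q : Fin d → ℤ) (p : EuclideanSpace ℝ (Fin d)) :
    ⟪vec q, p⟫ = ∑ i, (q i : ℝ) * p i := by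
  simp [PiLp.inner_apply, vec, mul_comm]

noncomputable def innerHom (p : EuclideanSpace ℝ (Fin d)) : (Fin d → ℤ) →+ ℝ :=
  AddMonoidHom.mk' (fun q => ⟪vec q, p⟫) fun q r => by
    simp only [inner_eq_sum, Pi.add_apply, Int.cast_add, add_mul, Finset.sum_add_distrib]

theorem innerHom_single (p : EuclideanSpace ℝ (Fin d)) (i : Fin d) :
    innerHom p (Pi.single i 1) = p i := by
  simp [innerHom, inner_eq_sum, Pi.single_apply]

theorem exists_eq_smul_of_range_innerHom_le {p : EuclideanSpace ℝ (Fin d)} {a : ℝ}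
    (h : (innerHom p).range ≤ AddSubgroup.zmultiples a) : ∃ z : Fin d → ℤ, p = a • vec z := by
  have hcoord : ∀ i, ∃ n : ℤ, n • a = p i := fun i =>
    innerHom_single p i ▸ h ⟨Pi.single i 1, rfl⟩
  choose z hz using hcoord
  refine ⟨z, PiLp.ext fun i => ?_⟩
  simp [vec, ← hz i, mul_comm]

theorem dense_range_inner (p : EuclideanSpace ℝ (Fin d))
    (hp : ¬ ∃ (lam : ℝ) (z : Fin d → ℤ), p = lam • vec z) :
    Dense (Set.range fun q : Fin d → ℤ => ⟪vec q, p⟫) := by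
  rcases AddSubgroup.dense_or_cyclic (innerHom p).range with hdense | ⟨a, ha⟩
  · simpa [innerHom] using hdense
  · rw [← AddSubgroup.zmultiples_eq_closure] at ha
    exact absurd ⟨a, exists_eq_smul_of_range_innerHom_le ha.le⟩ hp

end vec

/-- If `p ∈ ℝ^d` is irrational and `v : ℝ^d → ℝ` is `ℤ^d`-periodic, then for every
`t ∈ ℝ` the superlevel set `{v(x) + p·x > t}` is the union of the translates
`q + {v(x) + p·x > 0}` over all `q ∈ ℤ^d` with `q·p > t`. -/
theorem stmt15 (d : ℕ) (p : EuclideanSpace ℝ (Fin d))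
    (hp : ¬ ∃ (lam : ℝ) (z : Fin d → ℤ), p = lam • vec z)
    (v : EuclideanSpace ℝ (Fin d) → ℝ)
    (hper : ∀ x, ∀ q : Fin d → ℤ, v (x + vec q) = v x) (t : ℝ) :
    {x : EuclideanSpace ℝ (Fin d) | t < v x + ⟪p, x⟫} =
      ⋃ q ∈ {q : Fin d → ℤ | t < ⟪vec q, p⟫},
        (fun x => vec q + x) '' {x : EuclideanSpace ℝ (Fin d) | 0 < v x + ⟪p, x⟫} := by
  refine setOf_lt_eq_iUnion_image_add (fun x => v x + ⟪p, x⟫) vec _ (fun x q => ?_)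
    (vec.dense_range_inner p hp) t
  rw [hper, inner_add_right, real_inner_comm p (vec q)]
  ring
end

section
/- Let Z ⊆ ℤ^d contain 0 and each standard basis vector e₁, …, e_d, be closed under addition, and satisfy Z ≠ ℤ^d. Then −(e₁ + ⋯ + e_d) does not belong to the closure of the convex hull of Z, viewed as a subset of ℝ^d. -/
open scoped RealInnerProductSpace

/-!
Let `S` be the monoid `Z`. The open negative orthant is a neighbourhood of `-(e₁ + ⋯ + e_d)`, so
if that point lay in the closure of `conv S`, some point of `conv S` would have all coordinates
negative. Writing it as `∑ wₖ gₖ` with `gₖ ∈ S`, for large `N` the element `∑ ⌊N wₖ⌋ gₖ ∈ S`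
stays within a bounded distance of `N ∑ wₖ gₖ`, so it has negative coordinates too. Adding enough basis vectors to
multiples of such an element reaches every point of `ℤ^d`, so `S = ℤ^d`.
-/

open Filter

@[simp]
lemma vec_apply {d : ℕ} (q : Fin d → ℤ) (i : Fin d) : vec q i = q i := rfl

lemma Nat.floor_mul_le_mul_add_abs {a : ℝ} (ha : 0 ≤ a) (y : ℝ) :
    ⌊a⌋₊ * y ≤ a * y + |y| := by
  have hfloor : |(⌊a⌋₊ : ℝ) - a| ≤ 1 := by
    rw [abs_le]
    constructor <;> linarith [Nat.floor_le ha, Nat.lt_floor_add_one a]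
  calc (⌊a⌋₊ : ℝ) * y = a * y + ((⌊a⌋₊ : ℝ) - a) * y := by ring
    _ ≤ a * y + |(⌊a⌋₊ - a) * y| := by gcongr; exact le_abs_self _
    _ ≤ a * y + |y| := by
      rw [abs_mul]
      gcongr
      exact mul_le_of_le_one_left (abs_nonneg y) hfloor

namespace AddSubmonoid

variable {ι : Type*} [Fintype ι] [DecidableEq ι] {S : AddSubmonoid (ι → ℤ)}

lemma mem_of_nonneg (hbasis : ∀ i, Pi.single i 1 ∈ S) {v : ι → ℤ} (hv : 0 ≤ v) : v ∈ S := by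
  have hv_eq : v = ∑ i, (v i).toNat • Pi.single i 1 := by
    ext j
    simpa [Finset.sum_apply, Pi.single_apply] using hv j
  rw [hv_eq]
  exact S.sum_mem fun i _ => S.nsmul_mem (hbasis i) _

lemma eq_top_of_forall_neg_mem (hbasis : ∀ i, Pi.single i 1 ∈ S) {z : ι → ℤ} (hz : z ∈ S)
    (hneg : ∀ i, z i < 0) : S = ⊤ := by
  refine eq_top_iff.2 fun q _ => ?_
  set n := ∑ i, (q i).natAbs
  have hrest : 0 ≤ q - n • z := fun j => by
    have hj : (q j).natAbs ≤ n :=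
      Finset.single_le_sum (f := fun i => (q i).natAbs) (fun _ _ => Nat.zero_le _)
        (Finset.mem_univ j)
    have hqj : -q j ≤ n := by omega
    have hzj := hneg j
    simp only [Pi.zero_apply, Pi.sub_apply, nsmul_eq_mul, Pi.mul_apply, Pi.natCast_apply]
    nlinarith
  simpa using S.add_mem (S.nsmul_mem hz n) (mem_of_nonneg hbasis hrest)

end AddSubmonoid

lemma exists_mem_le_natCast_mul_add_of_mem_convexHull {d : ℕ} {S : AddSubmonoid (Fin d → ℤ)}
    {p : EuclideanSpace ℝ (Fin d)} (hp : p ∈ convexHull ℝ (vec '' (S : Set (Fin d → ℤ)))) :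
    ∃ C : Fin d → ℝ, ∀ N : ℕ, ∃ z ∈ S, ∀ i, (z i : ℝ) ≤ N * p i + C i := by
  obtain ⟨ι, _, w, x, hw0, -, hx, rfl⟩ := mem_convexHull_iff_exists_fintype.1 hp
  choose g hgS hgx using hx
  obtain rfl : x = fun k => vec (g k) := funext fun k => (hgx k).symm
  refine ⟨fun i => ∑ k, |(g k i : ℝ)|, fun N => ⟨∑ k, ⌊N * w k⌋₊ • g k,
    S.sum_mem fun k _ => S.nsmul_mem (hgS k) _, fun i => ?_⟩⟩
  simp only [Finset.sum_apply, nsmul_eq_mul, Pi.mul_apply, Pi.natCast_apply, Int.cast_sum,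
    Int.cast_mul, Int.cast_natCast, WithLp.ofLp_sum, PiLp.smul_apply, vec_apply, smul_eq_mul,
    Finset.mul_sum, ← Finset.sum_add_distrib]
  gcongr with k
  rw [← mul_assoc]
  exact Nat.floor_mul_le_mul_add_abs (mul_nonneg N.cast_nonneg (hw0 k)) _

lemma exists_forall_neg_mem_of_mem_convexHull {d : ℕ} {S : AddSubmonoid (Fin d → ℤ)}
    {p : EuclideanSpace ℝ (Fin d)} (hp : p ∈ convexHull ℝ (vec '' (S : Set (Fin d → ℤ))))
    (hneg : ∀ i, p i < 0) : ∃ z ∈ S, ∀ i, z i < 0 := by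
  obtain ⟨C, hC⟩ := exists_mem_le_natCast_mul_add_of_mem_convexHull hp
  have hlarge : ∀ᶠ N : ℕ in atTop, ∀ i, (N : ℝ) * p i + C i < 0 :=
    eventually_all.2 fun i => (tendsto_atBot_add_const_right _ _
      (tendsto_natCast_atTop_atTop.atTop_mul_const_of_neg (hneg i))).eventually_lt_atBot 0
  obtain ⟨N, hN⟩ := hlarge.exists
  obtain ⟨z, hzS, hz⟩ := hC N
  exact ⟨z, hzS, fun i => by exact_mod_cast (hz i).trans_lt (hN i)⟩

/-- If `Z ⊆ ℤ^d` contains `0` and every standard basis vector, is closed under addition,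
and `Z ≠ ℤ^d`, then `-(e₁ + ⋯ + e_d)` is not in the closure of the convex hull of `Z`
(viewed in `ℝ^d`). -/
theorem stmt16 (d : ℕ) (Z : Set (Fin d → ℤ)) (h0 : 0 ∈ Z)
    (hbasis : ∀ i : Fin d, (Pi.single i 1 : Fin d → ℤ) ∈ Z)
    (hadd : ∀ z₁ ∈ Z, ∀ z₂ ∈ Z, z₁ + z₂ ∈ Z)
    (hne : Z ≠ Set.univ) :
    vec (-(∑ i : Fin d, Pi.single i 1)) ∉ closure (convexHull ℝ (vec '' Z)) := by
  let S : AddSubmonoid (Fin d → ℤ) :=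
    { carrier := Z, add_mem' := fun ha hb => hadd _ ha _ hb, zero_mem' := h0 }
  intro hmem
  have hopen : IsOpen {x : EuclideanSpace ℝ (Fin d) | ∀ i, x i < 0} := by
    simp only [Set.ofPred_forall]
    exact isOpen_iInter_of_finite fun i => isOpen_lt (PiLp.continuous_apply _ _ i) continuous_const
  obtain ⟨p, hpneg, hp⟩ := mem_closure_iff.1 hmem _ hopen (by simp [Finset.sum_apply, Pi.single_apply])
  obtain ⟨z, hzS, hz⟩ := exists_forall_neg_mem_of_mem_convexHull (S := S) hp hpneg
  have hS : S = ⊤ := S.eq_top_of_forall_neg_mem hbasis hzS hz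
  exact hne (congrArg SetLike.coe hS)
end
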